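/- Let (G,*) be a group, k ≥ 1, and f_n : G^{k+1} → G for n ≥ 0. For u_0, v_1, …, v_k ∈ G define ζ_0 = u_0 and ζ_j = ζ_{j−1}^{-1} * v_j for j = 1,…,k. Then there exist functions g_n : G^k → G satisfying f_n(u_0, u_1, …, u_k) * u_0 = g_n(u_0 * u_1, u_1 * u_2, …, u_{k−1} * u_k) for all u_0,…,u_k ∈ G and all n (i.e. the equation x_{n+1} = f_n(x_n,…,x_{n−k}) has the identity form symmetry), if and only if for every n and all v_1,…,v_k ∈ G the quantity f_n(u_0, ζ_1, …, ζ_k) * u_0 is independent of u_0. -/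

import Mathlib

/-- The sequence `ζ_0 = u_0`, `ζ_j = ζ_{j-1}⁻¹ * v_j`. -/
def zetaId {G : Type*} [Group G] (u0 : G) (v : ℕ → G) : ℕ → G
  | 0 => u0
  | j + 1 => (zetaId u0 v j)⁻¹ * v (j + 1)

lemma zetaId_mul {G : Type*} [Group G] (u0 : G) (v : ℕ → G) (j : ℕ) :
    zetaId u0 v j * zetaId u0 v (j + 1) = v (j + 1) := by
  simp [zetaId]

/-- The difference equation with functions `f_n` has the identity form
symmetry (i.e. there exist `g_n` with
`f_n(u_0,…,u_k) * u_0 = g_n(u_0 * u_1, …, u_{k-1} * u_k)` for all arguments and all `n`)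
if and only if `f_n(u_0, ζ_1, …, ζ_k) * u_0` is independent of `u_0`. -/
theorem stmt_5 {G : Type*} [Group G] (k : ℕ) (hk : 1 ≤ k)
    (f : ℕ → (Fin (k + 1) → G) → G) :
    (∃ g : ℕ → (Fin k → G) → G, ∀ (n : ℕ) (u : Fin (k + 1) → G),
        f n u * u 0 = g n (fun j => u j.castSucc * u j.succ))
    ↔ ∀ (n : ℕ) (v : ℕ → G) (u0 u0' : G),
        f n (fun i => zetaId u0 v i.val) * u0 =
        f n (fun i => zetaId u0' v i.val) * u0' := by
  constructor
  · rintro ⟨g, hg⟩ n v u0 u0'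
    have key : ∀ w : G, f n (fun i => zetaId w v i.val) * w
        = g n (fun j : Fin k => v (j.val + 1)) := by
      intro w
      have := hg n (fun i => zetaId w v i.val)
      simpa [zetaId_mul, zetaId.eq_1, Fin.castSucc, Fin.succ] using this
    rw [key u0, key u0']
  · intro h
    set vOf : (Fin k → G) → ℕ → G := fun w j =>
      if hj : 1 ≤ j ∧ j ≤ k then w ⟨j - 1, by omega⟩ else 1 with hvOf
    refine ⟨fun n w => f n (fun i => zetaId 1 (vOf w) i.val) * 1, fun n u => ?_⟩
    set w : Fin k → G := fun j => u j.castSucc * u j.succ with hw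
    have hz : ∀ i : ℕ, (hi : i ≤ k) → zetaId (u 0) (vOf w) i = u ⟨i, by omega⟩ := by
      intro i
      induction i with
      | zero => intro _; simp [zetaId]
      | succ m ih =>
        intro hi
        have hm : m ≤ k := by omega
        rw [zetaId, ih hm]
        have : vOf w (m + 1) = u ⟨m, by omega⟩ * u ⟨m + 1, by omega⟩ := by
          simp only [hvOf]
          rw [dif_pos ⟨by omega, by omega⟩]
          simp [hw, Fin.castSucc, Fin.succ, Fin.castAdd, Fin.castLE]
        rw [this]
        group
    have h1 : (fun i : Fin (k+1) => zetaId (u 0) (vOf w) i.val) = u := by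
      funext i
      rw [hz i.val (by omega)]
    have := h n (vOf w) (u 0) 1
    rw [h1] at this
    simpa using this
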